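/- The Langevin function L(x) = coth(x) - 1/x (L(0)=0) is strictly concave on (0, ∞). -/

import Mathlib

/-!
Since `L'' x = 2 cosh x / sinh x ^ 3 - 2 / x ^ 3`, strict concavity amounts to
`x³ cosh x < sinh³ x` for `x > 0`, i.e. `x < sinh x · (cosh x)^(-1/3)`. The difference
`sinh x · (cosh x)^(-1/3) - x` vanishes at `0`, and with `u = (cosh x)^(1/3)`, so that
`sinh² x = u⁶ - 1`, its derivative is `(u² - 1)² (2u² + 1) / (3u⁴) > 0`.
-/

noncomputable def langevin (x : ℝ) : ℝ :=
  if x = 0 then 0 else Real.cosh x / Real.sinh x - 1 / x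

open Real Set Filter Topology

theorem hasDerivAt_sinh_mul_cosh_rpow_sub_id (x : ℝ) :
    HasDerivAt (fun y => sinh y * cosh y ^ (-(1 / 3) : ℝ) - y)
      (cosh x * cosh x ^ (-(1 / 3) : ℝ) +
        sinh x * (sinh x * (-(1 / 3)) * cosh x ^ (-(1 / 3) - 1 : ℝ)) - 1) x :=
  ((hasDerivAt_sinh x).mul ((hasDerivAt_cosh x).rpow_const (.inl (cosh_pos x).ne'))).sub
    (hasDerivAt_id x)

theorem deriv_sinh_mul_cosh_rpow_sub_id_pos {x : ℝ} (hx : x ≠ 0) :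
    0 < cosh x * cosh x ^ (-(1 / 3) : ℝ) +
      sinh x * (sinh x * (-(1 / 3)) * cosh x ^ (-(1 / 3) - 1 : ℝ)) - 1 := by
  have hc := cosh_pos x
  set u := cosh x ^ (1 / 3 : ℝ) with hu
  have hu0 : 0 < u := by positivity
  have hcu : cosh x = u ^ 3 := by
    rw [hu, ← rpow_natCast, ← rpow_mul hc.le]; norm_num
  have hu1 : 1 < u := by
    have := one_lt_cosh.2 hx
    rw [hcu, ← one_pow 3] at this
    exact lt_of_pow_lt_pow_left₀ 3 hu0.le this
  have h1 : cosh x ^ (-(1 / 3) : ℝ) = u⁻¹ := rpow_neg hc.le _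
  have h2 : cosh x ^ (-(1 / 3) - 1 : ℝ) = (u ^ 4)⁻¹ := by
    rw [show (-(1 / 3) - 1 : ℝ) = -(1 / 3 * (4 : ℕ)) by norm_num, rpow_neg hc.le,
      rpow_mul hc.le, rpow_natCast]
  have hs : sinh x ^ 2 = u ^ 6 - 1 := by rw [sinh_sq, hcu]; ring
  rw [h1, h2, show ∀ a b c : ℝ, a * (a * b * c) = a ^ 2 * b * c by intros; ring, hs, hcu]
  have hu2 : 0 < u ^ 2 - 1 := by nlinarith
  have hpos : 0 < (u ^ 2 - 1) ^ 2 * (2 * u ^ 2 + 1) / (3 * u ^ 4) := by positivity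
  convert hpos using 1
  field_simp
  ring

theorem strictMonoOn_sinh_mul_cosh_rpow_sub_id :
    StrictMonoOn (fun y => sinh y * cosh y ^ (-(1 / 3) : ℝ) - y) (Ici 0) := by
  refine strictMonoOn_of_deriv_pos (convex_Ici 0)
    (fun y _ => (hasDerivAt_sinh_mul_cosh_rpow_sub_id y).continuousAt.continuousWithinAt)
    fun y hy => ?_
  rw [interior_Ici] at hy
  rw [(hasDerivAt_sinh_mul_cosh_rpow_sub_id y).deriv]
  exact deriv_sinh_mul_cosh_rpow_sub_id_pos (ne_of_gt hy)

theorem pow_three_mul_cosh_lt_sinh_pow_three {x : ℝ} (hx : 0 < x) :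
    x ^ 3 * cosh x < sinh x ^ 3 := by
  have hlt : x < sinh x * cosh x ^ (-(1 / 3) : ℝ) := by
    simpa using strictMonoOn_sinh_mul_cosh_rpow_sub_id self_mem_Ici hx.le hx
  have hc := cosh_pos x
  have hcube : (sinh x * cosh x ^ (-(1 / 3) : ℝ)) ^ 3 = sinh x ^ 3 / cosh x := by
    rw [mul_pow, ← rpow_natCast (cosh x ^ _), ← rpow_mul hc.le]
    norm_num [rpow_neg_one, div_eq_mul_inv]
  have := pow_lt_pow_left₀ hlt hx.le three_ne_zero
  rwa [hcube, lt_div_iff₀ hc] at this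

theorem langevin_eventuallyEq {x : ℝ} (hx : x ≠ 0) :
    langevin =ᶠ[𝓝 x] fun y => cosh y / sinh y - 1 / y :=
  (eventually_ne_nhds hx).mono fun _ hy => if_neg hy

theorem hasDerivAt_langevin {x : ℝ} (hx : x ≠ 0) :
    HasDerivAt langevin (1 / x ^ 2 - 1 / sinh x ^ 2) x := by
  have hs : sinh x ≠ 0 := sinh_ne_zero.2 hx
  refine HasDerivAt.congr_of_eventuallyEq ?_ (langevin_eventuallyEq hx)
  refine (((hasDerivAt_cosh x).div (hasDerivAt_sinh x) hs).sub
    ((hasDerivAt_const x 1).div (hasDerivAt_id x) hx)).congr_deriv ?_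
  simp only [id_eq]
  field_simp
  linear_combination (-x ^ 2) * cosh_sq_sub_sinh_sq x

theorem hasDerivAt_deriv_langevin {x : ℝ} (hx : x ≠ 0) :
    HasDerivAt (deriv langevin) (2 * cosh x / sinh x ^ 3 - 2 / x ^ 3) x := by
  have hs : sinh x ≠ 0 := sinh_ne_zero.2 hx
  refine HasDerivAt.congr_of_eventuallyEq ?_
    ((eventually_ne_nhds hx).mono fun _ hy => (hasDerivAt_langevin hy).deriv)
  refine (((hasDerivAt_const x 1).div (hasDerivAt_pow 2 x) (pow_ne_zero 2 hx)).sub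
    ((hasDerivAt_const x 1).div ((hasDerivAt_sinh x).pow 2) (pow_ne_zero 2 hs))).congr_deriv ?_
  simp only [Pi.pow_apply]
  field_simp
  ring

theorem langevin_strictConcaveOn :
    StrictConcaveOn ℝ (Set.Ioi 0) langevin := by
  refine strictConcaveOn_of_deriv2_neg (convex_Ioi 0)
    (fun x hx => (hasDerivAt_langevin (ne_of_gt hx)).continuousAt.continuousWithinAt)
    fun x hx => ?_
  rw [interior_Ioi, mem_Ioi] at hx
  rw [Function.iterate_succ_apply', Function.iterate_one,
    (hasDerivAt_deriv_langevin hx.ne').deriv, sub_neg,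
    div_lt_div_iff₀ (pow_pos (sinh_pos_iff.2 hx) 3) (pow_pos hx 3)]
  linarith [pow_three_mul_cosh_lt_sinh_pow_three hx]
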